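/- arXiv:1508.03586 — 6 statements merged into one kernel-verified Lean document; each statement's English description precedes it below -/
import Mathlib

section
/- Consider a chain of complex vector spaces ℂ^{n_1}, …, ℂ^{n_r} with linear maps α_i : ℂ^{n_i} → ℂ^{n_{i+1}} and β_i : ℂ^{n_{i+1}} → ℂ^{n_i} for 1 ≤ i ≤ r−1, and nonzero scalars q_2, …, q_r ∈ ℂ satisfying the multiplicative quiver equations 1 + β_{i+1}α_{i+1} = q_{i+1}(1 + α_i β_i) for 0 ≤ i ≤ r−2 (where α_0 β_0 is interpreted as 0). Define X_k = α_{r-1}α_{r-2}⋯α_{r-k} β_{r-k}⋯β_{r-2}β_{r-1} ∈ End(ℂ^{n_r}) for 1 ≤ k ≤ r−1, X = X_1, and X_r = 0. Then for each 1 ≤ k ≤ r−1: X_k · X = (q_{r-1}⋯q_{r-k} − 1)·X_k + q_{r-1}⋯q_{r-k}·X_{k+1}. -/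
/- We index the chain of vector spaces from the top: `V 0` corresponds to `ℂ^{n_r}`,
and in general `V j` corresponds to `ℂ^{n_{r-j}}`.  Thus `a j : V (j+1) →ₗ V j`
corresponds to `α_{r-1-j}` and `b j : V j →ₗ V (j+1)` corresponds to `β_{r-1-j}`,
while the scalar `p j` corresponds to `q_{r-1-j}`.  The multiplicative quiver
equations `1 + β_{i+1} α_{i+1} = q_{i+1} (1 + α_i β_i)` (for `0 ≤ i ≤ r-2`, with
`α_0 β_0 = 0`) become, for `j = r-2-i`:
`1 + b j ∘ a j = p j • (1 + a (j+1) ∘ b (j+1))` for `j < r-2`, together with the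
boundary equation `1 + b (r-2) ∘ a (r-2) = p (r-2) • 1`. -/

/-- `Acomp a k = α_{r-1} ∘ ⋯ ∘ α_{r-k} : ℂ^{n_{r-k}} → ℂ^{n_r}` in reversed indexing. -/
def Acomp {V : ℕ → Type*} [∀ i, AddCommGroup (V i)] [∀ i, Module ℂ (V i)]
    (a : ∀ j, V (j + 1) →ₗ[ℂ] V j) : (k : ℕ) → (V k →ₗ[ℂ] V 0)
  | 0 => LinearMap.id
  | (k + 1) => (Acomp a k) ∘ₗ (a k)

/-- `Bcomp b k = β_{r-k} ∘ ⋯ ∘ β_{r-1} : ℂ^{n_r} → ℂ^{n_{r-k}}` in reversed indexing. -/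
def Bcomp {V : ℕ → Type*} [∀ i, AddCommGroup (V i)] [∀ i, Module ℂ (V i)]
    (b : ∀ j, V j →ₗ[ℂ] V (j + 1)) : (k : ℕ) → (V 0 →ₗ[ℂ] V k)
  | 0 => LinearMap.id
  | (k + 1) => (b k) ∘ₗ (Bcomp b k)

/-- `Xk a b r k = X_k = α_{r-1} ⋯ α_{r-k} β_{r-k} ⋯ β_{r-1} ∈ End(ℂ^{n_r})`
for `k ≤ r - 1`, with the convention `X_r = 0`. -/
noncomputable def Xk {V : ℕ → Type*} [∀ i, AddCommGroup (V i)] [∀ i, Module ℂ (V i)]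
    (a : ∀ j, V (j + 1) →ₗ[ℂ] V j) (b : ∀ j, V j →ₗ[ℂ] V (j + 1)) (r k : ℕ) :
    Module.End ℂ (V 0) :=
  if k = r then 0 else (Acomp a k) ∘ₗ (Bcomp b k)

/-! Right-composing the quiver equation at level `j` with `b j` rewrites `b j ∘ (a j ∘ b j)` as
`(p j - 1) • b j + p j • (Y (j+1) ∘ b j)`, where `Y m` is `a m ∘ b m` except that it vanishes at
the bottom level. Pushing `X = Y 0` down through `β_{r-k} ⋯ β_{r-1}` one level at a time thus gives
`Bcomp b k ∘ X = (P - 1) • Bcomp b k + P • (Y k ∘ Bcomp b k)` with `P = ∏_{j<k} p j`, and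
composing on the left with `α_{r-1} ⋯ α_{r-k}` yields the recursion, because
`Acomp a k ∘ Y k ∘ Bcomp b k = X_{k+1}`. -/

theorem LinearMap.comp_comp_eq_of_one_add_comp_eq {R M N : Type*} [CommRing R]
    [AddCommGroup M] [Module R M] [AddCommGroup N] [Module R N]
    (f : M →ₗ[R] N) (g : N →ₗ[R] M) (c : R) (Z : Module.End R N)
    (h : 1 + f ∘ₗ g = c • (1 + Z)) :
    f ∘ₗ g ∘ₗ f = (c - 1) • f + c • (Z ∘ₗ f) := by
  ext v
  have hv := congrArg (fun φ : Module.End R N => φ (f v)) h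
  simp only [LinearMap.add_apply, Module.End.one_apply, LinearMap.comp_apply,
    LinearMap.smul_apply] at hv ⊢
  linear_combination (norm := module) hv

section Chain

variable {V : ℕ → Type*} [∀ i, AddCommGroup (V i)] [∀ i, Module ℂ (V i)]
  (a : ∀ j, V (j + 1) →ₗ[ℂ] V j) (b : ∀ j, V j →ₗ[ℂ] V (j + 1))

/-- `α_{r-1-m} β_{r-1-m}`, vanishing at `m = r - 1` by the convention `α_0 β_0 = 0`. -/
noncomputable def abComp (r m : ℕ) : Module.End ℂ (V m) :=
  if m + 1 = r then 0 else a m ∘ₗ b m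

theorem Xk_succ (r k : ℕ) :
    Xk a b r (k + 1) = Acomp a k ∘ₗ abComp a b r k ∘ₗ Bcomp b k := by
  unfold Xk abComp
  split_ifs <;> simp [Acomp, Bcomp, LinearMap.comp_assoc]

theorem Xk_one (r : ℕ) : Xk a b r 1 = abComp a b r 0 := by
  simp [Xk_succ, Acomp, Bcomp]

theorem Bcomp_comp_eq (p : ℕ → ℂ) (Y : ∀ m, Module.End ℂ (V m)) (n : ℕ)
    (hY : ∀ m < n, Y m = a m ∘ₗ b m)
    (heq : ∀ j < n, 1 + b j ∘ₗ a j = p j • (1 + Y (j + 1))) :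
    Bcomp b n ∘ₗ Y 0 = ((∏ j ∈ Finset.range n, p j) - 1) • Bcomp b n
      + (∏ j ∈ Finset.range n, p j) • (Y n ∘ₗ Bcomp b n) := by
  induction n with
  | zero => simp [Bcomp]
  | succ n ih =>
    set P := ∏ j ∈ Finset.range n, p j
    have hstep :=
      (b n).comp_comp_eq_of_one_add_comp_eq (a n) (p n) (Y (n + 1)) (heq n n.lt_succ_self)
    calc Bcomp b (n + 1) ∘ₗ Y 0 = b n ∘ₗ (Bcomp b n ∘ₗ Y 0) := rfl
      _ = (P - 1) • Bcomp b (n + 1) + P • ((b n ∘ₗ a n ∘ₗ b n) ∘ₗ Bcomp b n) := by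
        rw [ih (fun m hm => hY m (by omega)) (fun j hj => heq j (by omega)), hY n n.lt_succ_self]
        simp only [LinearMap.comp_add, LinearMap.comp_smul]
        rfl
      _ = _ := by
        rw [hstep, Finset.prod_range_succ]
        simp only [Bcomp, LinearMap.add_comp, LinearMap.smul_comp, LinearMap.comp_assoc]
        module

end Chain

theorem Xk_mul_X_general (V : ℕ → Type*) [∀ i, AddCommGroup (V i)] [∀ i, Module ℂ (V i)]
    (r : ℕ)
    (a : ∀ j, V (j + 1) →ₗ[ℂ] V j) (b : ∀ j, V j →ₗ[ℂ] V (j + 1))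
    (p : ℕ → ℂ)
    (heq : ∀ j, j < r - 2 →
      (1 : Module.End ℂ (V (j + 1))) + (b j) ∘ₗ (a j)
        = p j • ((1 : Module.End ℂ (V (j + 1))) + (a (j + 1)) ∘ₗ (b (j + 1))))
    (hbound : (1 : Module.End ℂ (V ((r - 2) + 1))) + (b (r - 2)) ∘ₗ (a (r - 2))
        = p (r - 2) • (1 : Module.End ℂ (V ((r - 2) + 1)))) :
    ∀ k, 1 ≤ k → k ≤ r - 1 →
      (Xk a b r k) * (Xk a b r 1)
        = ((∏ j ∈ Finset.range k, p j) - 1) • Xk a b r k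
            + (∏ j ∈ Finset.range k, p j) • Xk a b r (k + 1) := by
  intro k _ hkr
  have hquiver : ∀ j < r - 1, 1 + b j ∘ₗ a j = p j • (1 + abComp a b r (j + 1)) := by
    intro j hj
    by_cases hjr : j < r - 2
    · rw [abComp, if_neg (by omega)]
      exact heq j hjr
    · obtain rfl : j = r - 2 := by omega
      rw [abComp, if_pos (by omega), add_zero]
      exact hbound
  have hpush := Bcomp_comp_eq a b p (abComp a b r) k
    (fun m hm => if_neg (by omega)) (fun j hj => hquiver j (by omega))
  rw [Xk, if_neg (by omega), Xk_one, Xk_succ, Module.End.mul_eq_comp, LinearMap.comp_assoc,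
    hpush, LinearMap.comp_add, LinearMap.comp_smul, LinearMap.comp_smul]

/-- The recursion `X_k X = (q_{r-1}⋯q_{r-k} − 1) X_k + q_{r-1}⋯q_{r-k} X_{k+1}`
for `1 ≤ k ≤ r-1`, where `q_{r-1}⋯q_{r-k} = ∏_{j<k} p j`. -/
theorem Xk_mul_X (V : ℕ → Type*) [∀ i, AddCommGroup (V i)] [∀ i, Module ℂ (V i)]
    (r : ℕ) (hr : 2 ≤ r)
    (a : ∀ j, V (j + 1) →ₗ[ℂ] V j) (b : ∀ j, V j →ₗ[ℂ] V (j + 1))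
    (p : ℕ → ℂ) (hp : ∀ j, p j ≠ 0)
    (heq : ∀ j, j < r - 2 →
      (1 : Module.End ℂ (V (j + 1))) + (b j) ∘ₗ (a j)
        = p j • ((1 : Module.End ℂ (V (j + 1))) + (a (j + 1)) ∘ₗ (b (j + 1))))
    (hbound : (1 : Module.End ℂ (V ((r - 2) + 1))) + (b (r - 2)) ∘ₗ (a (r - 2))
        = p (r - 2) • (1 : Module.End ℂ (V ((r - 2) + 1)))) :
    ∀ k, 1 ≤ k → k ≤ r - 1 →
      (Xk a b r k) * (Xk a b r 1)
        = ((∏ j ∈ Finset.range k, p j) - 1) • Xk a b r k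
            + (∏ j ∈ Finset.range k, p j) • Xk a b r (k + 1) :=
  Xk_mul_X_general V r a b p heq hbound
end

section
/- With the hypotheses of the multiplicative quiver equations (1 + β_{i+1}α_{i+1} = q_{i+1}(1 + α_i β_i), α_0β_0 = 0, all q_i nonzero), the endomorphism Y = 1 + α_{r-1}β_{r-1} ∈ End(ℂ^{n_r}) satisfies the polynomial equation (Y − 1)(Y − q_{r-1})(Y − q_{r-1}q_{r-2})⋯(Y − q_{r-1}⋯q_1) = 0. -/
/-!
Write `Y = 1 + a b` and `X = 1 + b a` for a pair of maps `a : W → V`, `b : V → W` (in the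
quiver, indices run backwards from `V 0 = ℂ^{n_r}`). Since `Y a = a X`, every polynomial
intertwines the same way, so if `f(X) = 0` then `(Y - 1) f(Y) = f(Y) a b = a f(X) b = 0`.
The quiver relation `X_j = p_j Y_{j+1}` turns an annihilating polynomial of `Y_{j+1}` into one
of `X_j` with all roots multiplied by `p_j`; starting from `X = p • 1` at the end of the chain,
each step down therefore adds the root `1` and rescales the others, which yields the roots
`∏_{i<k} p_i`, `k < r`, for `Y_0`.
-/

open Polynomial

section Intertwining

variable {R V W : Type*} [CommRing R] [AddCommGroup V] [Module R V] [AddCommGroup W] [Module R W]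
  (a : W →ₗ[R] V) (b : V →ₗ[R] W)

theorem aeval_one_add_comp_comp (f : R[X]) :
    aeval (1 + a ∘ₗ b) f ∘ₗ a = a ∘ₗ aeval (1 + b ∘ₗ a) f := by
  have h : (1 + a ∘ₗ b) ∘ₗ a = a ∘ₗ (1 + b ∘ₗ a) := by ext; simp
  induction f using Polynomial.induction_on' with
  | add f g hf hg => simp only [map_add, LinearMap.add_comp, LinearMap.comp_add, hf, hg]
  | monomial n c =>
    simp only [aeval_monomial, Algebra.algebraMap_eq_smul_one, smul_mul_assoc, one_mul,
      LinearMap.smul_comp, LinearMap.comp_smul, Module.End.commute_pow_left_of_commute h n]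

theorem aeval_one_add_comp_X_sub_one_mul_eq_zero {f : R[X]} (hf : aeval (1 + b ∘ₗ a) f = 0) :
    aeval (1 + a ∘ₗ b) ((X - C (1 : R)) * f) = 0 := by
  have hX : aeval (1 + a ∘ₗ b) (X - C (1 : R)) = a ∘ₗ b := by simp
  rw [mul_comm, map_mul, hX, Module.End.mul_eq_comp, ← LinearMap.comp_assoc,
    aeval_one_add_comp_comp, hf, LinearMap.comp_zero, LinearMap.zero_comp]

end Intertwining

theorem aeval_smul_prod_X_sub_C {R M : Type*} [CommRing R] [AddCommGroup M] [Module R M]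
    (T : Module.End R M) (c : R) (l : List R) :
    aeval (c • T) (l.map fun z => X - C (c * z)).prod
      = c ^ l.length • aeval T (l.map fun z => X - C z).prod := by
  induction l with
  | nil => simp
  | cons z l ih =>
    have hz : aeval (c • T) (X - C (c * z)) = c • aeval T (X - C z) := by
      simp [Algebra.algebraMap_eq_smul_one, smul_sub, smul_smul, mul_comm]
    rw [List.map_cons, List.prod_cons, map_mul, hz, ih, smul_mul_smul_comm, List.map_cons,
      List.prod_cons, map_mul, List.length_cons, pow_succ']

section Chain

variable {R : Type*} [CommRing R]

def chainRoots (p : ℕ → R) (n : ℕ) : List R :=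
  (List.range n).map fun k => ∏ i ∈ Finset.range k, p i

theorem chainRoots_succ (p : ℕ → R) (n : ℕ) :
    chainRoots p (n + 1) = 1 :: (chainRoots (fun i => p (i + 1)) n).map (p 0 * ·) := by
  simp [chainRoots, List.range_succ_eq_map, Finset.prod_range_succ', mul_comm]

variable {V W : Type*} [AddCommGroup V] [Module R V] [AddCommGroup W] [Module R W]

theorem aeval_one_add_comp_chainRoots_succ_eq_zero (a : W →ₗ[R] V) (b : V →ₗ[R] W)
    {T : Module.End R W} {p : ℕ → R} {n : ℕ} (hba : 1 + b ∘ₗ a = p 0 • T)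
    (hT : aeval T ((chainRoots (fun i => p (i + 1)) n).map fun z => X - C z).prod = 0) :
    aeval (1 + a ∘ₗ b) ((chainRoots p (n + 1)).map fun z => X - C z).prod = 0 := by
  rw [chainRoots_succ, List.map_cons, List.prod_cons, List.map_map]
  apply aeval_one_add_comp_X_sub_one_mul_eq_zero
  rw [hba, Function.comp_def, aeval_smul_prod_X_sub_C, hT, smul_zero]

theorem aeval_one_add_comp_chainRoots_eq_zero {V : ℕ → Type*} [∀ i, AddCommGroup (V i)]
    [∀ i, Module R (V i)] (a : ∀ j, V (j + 1) →ₗ[R] V j) (b : ∀ j, V j →ₗ[R] V (j + 1))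
    (p : ℕ → R) (n : ℕ)
    (heq : ∀ j < n, 1 + b j ∘ₗ a j = p j • (1 + a (j + 1) ∘ₗ b (j + 1)))
    (hbound : 1 + b n ∘ₗ a n = p n • 1) :
    aeval (1 + a 0 ∘ₗ b 0) ((chainRoots p (n + 2)).map fun z => X - C z).prod = 0 := by
  induction n generalizing V p with
  | zero =>
    exact aeval_one_add_comp_chainRoots_succ_eq_zero (a 0) (b 0) hbound (by simp [chainRoots])
  | succ n ih =>
    exact aeval_one_add_comp_chainRoots_succ_eq_zero (a 0) (b 0) (heq 0 n.succ_pos)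
      (ih (fun j => a (j + 1)) (fun j => b (j + 1)) _ (fun j hj => heq (j + 1) (by omega)) hbound)

end Chain

theorem Y_satisfies_polynomial_general (V : ℕ → Type*) [∀ i, AddCommGroup (V i)] [∀ i, Module ℂ (V i)]
    (r : ℕ) (hr : 2 ≤ r)
    (a : ∀ j, V (j + 1) →ₗ[ℂ] V j) (b : ∀ j, V j →ₗ[ℂ] V (j + 1))
    (p : ℕ → ℂ)
    (heq : ∀ j, j < r - 2 →
      (1 : Module.End ℂ (V (j + 1))) + (b j) ∘ₗ (a j)
        = p j • ((1 : Module.End ℂ (V (j + 1))) + (a (j + 1)) ∘ₗ (b (j + 1))))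
    (hbound : (1 : Module.End ℂ (V ((r - 2) + 1))) + (b (r - 2)) ∘ₗ (a (r - 2))
        = p (r - 2) • (1 : Module.End ℂ (V ((r - 2) + 1)))) :
    ((List.range r).map (fun k =>
        ((1 : Module.End ℂ (V 0)) + (a 0) ∘ₗ (b 0))
          - (∏ j ∈ Finset.range k, p j) • (1 : Module.End ℂ (V 0)))).prod = 0 := by
  obtain ⟨n, rfl⟩ : ∃ n, r = n + 2 := ⟨r - 2, by omega⟩
  have h := aeval_one_add_comp_chainRoots_eq_zero a b p n heq hbound
  rw [map_list_prod, List.map_map] at h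
  simpa [chainRoots, Function.comp_def, Algebra.algebraMap_eq_smul_one] using h

theorem Y_satisfies_polynomial (V : ℕ → Type*) [∀ i, AddCommGroup (V i)] [∀ i, Module ℂ (V i)]
    (r : ℕ) (hr : 2 ≤ r)
    (a : ∀ j, V (j + 1) →ₗ[ℂ] V j) (b : ∀ j, V j →ₗ[ℂ] V (j + 1))
    (p : ℕ → ℂ) (hp : ∀ j, p j ≠ 0)
    (heq : ∀ j, j < r - 2 →
      (1 : Module.End ℂ (V (j + 1))) + (b j) ∘ₗ (a j)
        = p j • ((1 : Module.End ℂ (V (j + 1))) + (a (j + 1)) ∘ₗ (b (j + 1))))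
    (hbound : (1 : Module.End ℂ (V ((r - 2) + 1))) + (b (r - 2)) ∘ₗ (a (r - 2))
        = p (r - 2) • (1 : Module.End ℂ (V ((r - 2) + 1)))) :
    ((List.range r).map (fun k =>
        ((1 : Module.End ℂ (V 0)) + (a 0) ∘ₗ (b 0))
          - (∏ j ∈ Finset.range k, p j) • (1 : Module.End ℂ (V 0)))).prod = 0 :=
  Y_satisfies_polynomial_general V r hr a b p heq hbound
end

section
/- Suppose the multiplicative quiver equations 1 + β_i α_i = q_i (1 + α_{i-1} β_{i-1}) hold with all q_i nonzero. Then for every i, every τ ∈ ℂ, and every m ≥ 1, the map α_i sends the generalised eigenspace ker(1 + α_{i-1}β_{i-1} − τ q_i^{-1})^m into ker(1 + α_i β_i − τ)^m, and β_i sends ker(1 + α_i β_i − τ)^m into ker(1 + α_{i-1}β_{i-1} − τ q_i^{-1})^m. -/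
/-!
Put `C = 1 + αprev βprev − τ q⁻¹` and `B = 1 + β α − τ` on `V`, `A = 1 + α β − τ` on `W`.
The quiver equation says exactly `q • C = B`, so `C^m` and `B^m` have the same kernel since
`q ≠ 0`. On the other hand `α B = A α` and `β A = B β` hold for any pair of maps, and an
intertwiner `φ f = g φ` carries `ker f^m` into `ker g^m`.
-/

open LinearMap

theorem LinearMap.apply_mem_ker_pow_of_comp_eq {R M N : Type*} [Semiring R] [AddCommMonoid M]
    [Module R M] [AddCommMonoid N] [Module R N] {f : Module.End R M} {g : Module.End R N}
    {φ : M →ₗ[R] N} (h : g ∘ₗ φ = φ ∘ₗ f) (m : ℕ) {v : M} (hv : v ∈ ker (f ^ m)) :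
    φ v ∈ ker (g ^ m) := by
  rw [mem_ker] at hv ⊢
  rw [← comp_apply, Module.End.commute_pow_left_of_commute h m, comp_apply, hv, map_zero]

theorem LinearMap.one_add_comp_sub_smul_comp {R M N : Type*} [CommRing R] [AddCommGroup M]
    [Module R M] [AddCommGroup N] [Module R N] (α : M →ₗ[R] N) (β : N →ₗ[R] M) (τ : R) :
    (1 + α ∘ₗ β - τ • 1) ∘ₗ α = α ∘ₗ (1 + β ∘ₗ α - τ • 1) := by
  ext v
  simp [map_sub]

theorem mult_quiver_maps_generalised_eigenspaces_general
    (U V W : Type*) [AddCommGroup U] [Module ℂ U] [AddCommGroup V] [Module ℂ V]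
    [AddCommGroup W] [Module ℂ W]
    (αprev : U →ₗ[ℂ] V) (βprev : V →ₗ[ℂ] U) (α : V →ₗ[ℂ] W) (β : W →ₗ[ℂ] V)
    (q : ℂ) (hq : q ≠ 0)
    (heq : (1 : Module.End ℂ V) + β ∘ₗ α
      = q • ((1 : Module.End ℂ V) + αprev ∘ₗ βprev)) (τ : ℂ) (m : ℕ) :
    (∀ v ∈ LinearMap.ker (((1 : Module.End ℂ V) + αprev ∘ₗ βprev - (τ * q⁻¹) • 1) ^ m),
        α v ∈ LinearMap.ker (((1 : Module.End ℂ W) + α ∘ₗ β - τ • 1) ^ m)) ∧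
    (∀ w ∈ LinearMap.ker (((1 : Module.End ℂ W) + α ∘ₗ β - τ • 1) ^ m),
        β w ∈ LinearMap.ker (((1 : Module.End ℂ V) + αprev ∘ₗ βprev - (τ * q⁻¹) • 1) ^ m)) := by
  have hscale : q • ((1 : Module.End ℂ V) + αprev ∘ₗ βprev - (τ * q⁻¹) • 1)
      = 1 + β ∘ₗ α - τ • 1 := by
    rw [smul_sub, ← heq, smul_smul, mul_left_comm, mul_inv_cancel₀ hq, mul_one]
  have hker : ker (((1 : Module.End ℂ V) + αprev ∘ₗ βprev - (τ * q⁻¹) • 1) ^ m)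
      = ker ((1 + β ∘ₗ α - τ • 1) ^ m) := by
    rw [← hscale, smul_pow, ker_smul _ _ (pow_ne_zero m hq)]
  rw [hker]
  exact ⟨fun v hv => apply_mem_ker_pow_of_comp_eq (one_add_comp_sub_smul_comp α β τ) m hv,
    fun w hw => apply_mem_ker_pow_of_comp_eq (one_add_comp_sub_smul_comp β α τ) m hw⟩

/-- The quiver maps preserve generalised eigenspaces: with the multiplicative quiver
equation `1 + β α = q • (1 + αprev βprev)` in `End V` (where `αprev = α_{i-1} : U → V`,
`βprev = β_{i-1} : V → U`, `α = α_i : V → W`, `β = β_i : W → V`, `q ≠ 0`), for every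
`τ ∈ ℂ` and `m ≥ 1` the map `α` sends `ker (1 + αprev βprev − τ q⁻¹)^m` into
`ker (1 + α β − τ)^m`, and `β` sends `ker (1 + α β − τ)^m` into
`ker (1 + αprev βprev − τ q⁻¹)^m`. -/
theorem mult_quiver_maps_generalised_eigenspaces
    (U V W : Type*) [AddCommGroup U] [Module ℂ U] [AddCommGroup V] [Module ℂ V]
    [AddCommGroup W] [Module ℂ W]
    (αprev : U →ₗ[ℂ] V) (βprev : V →ₗ[ℂ] U) (α : V →ₗ[ℂ] W) (β : W →ₗ[ℂ] V)
    (q : ℂ) (hq : q ≠ 0)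
    (heq : (1 : Module.End ℂ V) + β ∘ₗ α
      = q • ((1 : Module.End ℂ V) + αprev ∘ₗ βprev)) (τ : ℂ) (m : ℕ) (hm : 1 ≤ m) :
    (∀ v ∈ LinearMap.ker (((1 : Module.End ℂ V) + αprev ∘ₗ βprev - (τ * q⁻¹) • 1) ^ m),
        α v ∈ LinearMap.ker (((1 : Module.End ℂ W) + α ∘ₗ β - τ • 1) ^ m)) ∧
    (∀ w ∈ LinearMap.ker (((1 : Module.End ℂ W) + α ∘ₗ β - τ • 1) ^ m),
        β w ∈ LinearMap.ker (((1 : Module.End ℂ V) + αprev ∘ₗ βprev - (τ * q⁻¹) • 1) ^ m)) :=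
  mult_quiver_maps_generalised_eigenspaces_general U V W αprev βprev α β q hq heq τ m
end

section
/- For a full-flag toric multiplicative quiver, where α_k : ℂ^k → ℂ^{k+1} has entries (α_k)_{jj} = ν_j^k for 1 ≤ j ≤ k and zeros elsewhere, and β_k : ℂ^{k+1} → ℂ^k has entries (β_k)_{jj} = μ_j^k and zeros elsewhere, the multiplicative quiver equations 1 + β_{i+1}α_{i+1} = q_{i+1}(1 + α_i β_i) (with α_0β_0 = 0) hold if and only if μ_j^i ν_j^i = q_i q_{i-1} ⋯ q_j − 1 for all 1 ≤ j ≤ i ≤ r−1. -/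
/-- The toric map `α_k : ℂ^k → ℂ^{k+1}`, a `(k+1) × k` matrix with diagonal entries
`ν k 0, …, ν k (k-1)` (corresponding to `ν_1^k, …, ν_k^k`) and zeros elsewhere. -/
def toricAlpha (ν : ℕ → ℕ → ℂ) (k : ℕ) : Matrix (Fin (k + 1)) (Fin k) ℂ :=
  fun i j => if (i : ℕ) = (j : ℕ) then ν k j else 0

/-- The toric map `β_k : ℂ^{k+1} → ℂ^k`, a `k × (k+1)` matrix with diagonal entries
`μ k 0, …, μ k (k-1)` (corresponding to `μ_1^k, …, μ_k^k`) and zeros elsewhere. -/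
def toricBeta (μ : ℕ → ℕ → ℂ) (k : ℕ) : Matrix (Fin k) (Fin (k + 1)) ℂ :=
  fun i j => if (i : ℕ) = (j : ℕ) then μ k i else 0

/-!
All the products `β_k α_k` and `α_k β_k` are diagonal, so the quiver equations split into scalar
recursions along each diagonal index `j`: `1 + μ_j^{i+1} ν_j^{i+1} = q_{i+1} (1 + μ_j^i ν_j^i)`,
started from the value `1` at `i = j` (the last diagonal entry of `1 + α_j β_j`). Such a
recursion holds exactly when it telescopes to `1 + μ_j^i ν_j^i = q_i ⋯ q_{j+1}`.
-/

open Matrix Finset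

section Recursion

variable {M : Type*} [CommMonoid M]

theorem recursion_iff_eq_prod_Icc (w : ℕ → ℕ → M) (hw : ∀ i, w i i = 1) (q : ℕ → M) (N : ℕ) :
    (∀ i ≤ N, ∀ j ≤ i, w (i + 1) j = q (i + 1) * w i j) ↔
      ∀ i ≤ N + 1, ∀ j ≤ i, w i j = ∏ t ∈ Icc (j + 1) i, q t := by
  constructor
  · intro hrec i
    induction i with
    | zero => intro _ j hj; simp [Nat.le_zero.mp hj, hw]
    | succ i ih =>
      intro hi j hj
      rcases hj.lt_or_eq with hj | rfl
      · rw [hrec i (by omega) j (by omega), ih (by omega) j (by omega),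
          prod_Icc_succ_top (by omega), mul_comm]
      · simp [hw]
  · intro hprod i hi j hj
    rw [hprod (i + 1) (by omega) j (by omega), hprod i (by omega) j hj,
      prod_Icc_succ_top (by omega), mul_comm]

end Recursion

section Weight

variable {R : Type*} [CommRing R]

/-- The diagonal of `1 + α_k β_k` when `x k a = μ_a^k ν_a^k`. Its value `1` at `a = k` is what
turns the quiver equations into the uniform recursion `w (k + 1) a = q (k + 1) * w k a`. -/
def shiftedWeight (x : ℕ → ℕ → R) (k a : ℕ) : R :=
  1 + if a < k then x k a else 0

@[simp]
theorem shiftedWeight_self (x : ℕ → ℕ → R) (k : ℕ) : shiftedWeight x k k = 1 := by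
  simp [shiftedWeight]

theorem shiftedWeight_of_lt {x : ℕ → ℕ → R} {k a : ℕ} (h : a < k) :
    shiftedWeight x k a = 1 + x k a := by
  simp [shiftedWeight, h]

theorem forall_shiftedWeight_eq_iff (x p : ℕ → ℕ → R) (hp : ∀ i, p i i = 1) (N : ℕ) :
    (∀ i ≤ N, ∀ j ≤ i, shiftedWeight x i j = p i j) ↔
      ∀ i j, 1 ≤ i → i ≤ N → j < i → x i j = p i j - 1 := by
  constructor
  · intro h i j _ hi hj
    rw [← h i hi j hj.le, shiftedWeight_of_lt hj, add_sub_cancel_left]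
  · intro h i hi j hj
    rcases hj.lt_or_eq with hj | rfl
    · rw [shiftedWeight_of_lt hj, h i j (by omega) hi hj, add_sub_cancel]
    · rw [shiftedWeight_self, hp]

end Weight

section Toric

variable (μ ν : ℕ → ℕ → ℂ) (k : ℕ)

theorem toricBeta_mul_toricAlpha :
    toricBeta μ k * toricAlpha ν k = diagonal fun a : Fin k => μ k a * ν k a := by
  ext a b
  rw [mul_apply, sum_eq_single a.castSucc]
  · by_cases hab : a = b <;> simp [toricBeta, toricAlpha, diagonal, Fin.val_eq_val, hab]
  · intro c _ hc
    have : (a : ℕ) ≠ c := fun h => hc (Fin.ext h.symm)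
    simp [toricBeta, this]
  · simp

theorem toricAlpha_mul_toricBeta :
    toricAlpha ν k * toricBeta μ k =
      diagonal fun a : Fin (k + 1) => if (a : ℕ) < k then μ k a * ν k a else 0 := by
  ext a b
  rw [mul_apply]
  by_cases ha : (a : ℕ) < k
  · rw [sum_eq_single ⟨a, ha⟩]
    · by_cases hab : a = b
      · subst hab; simp [toricBeta, toricAlpha, diagonal, ha, mul_comm]
      · simp [toricBeta, toricAlpha, diagonal, hab, Fin.val_eq_val]
    · intro c _ hc
      have : (a : ℕ) ≠ c := fun h => hc (Fin.ext h.symm)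
      simp [toricAlpha, this]
    · simp
  · have : ∀ c : Fin k, (a : ℕ) ≠ c := fun c h => ha (h ▸ c.isLt)
    simp [toricAlpha, diagonal, ha, this]

theorem one_add_toricBeta_mul_toricAlpha :
    1 + toricBeta μ k * toricAlpha ν k =
      diagonal fun a : Fin k => shiftedWeight (fun i j => μ i j * ν i j) k a := by
  rw [toricBeta_mul_toricAlpha, ← diagonal_one, diagonal_add]
  simp [shiftedWeight_of_lt]

theorem one_add_toricAlpha_mul_toricBeta :
    1 + toricAlpha ν k * toricBeta μ k =
      diagonal fun a : Fin (k + 1) => shiftedWeight (fun i j => μ i j * ν i j) k a := by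
  rw [toricAlpha_mul_toricBeta, ← diagonal_one, diagonal_add]
  rfl

theorem toric_quiver_equation_iff (q : ℂ) :
    1 + toricBeta μ (k + 1) * toricAlpha ν (k + 1) = q • (1 + toricAlpha ν k * toricBeta μ k) ↔
      ∀ j ≤ k, shiftedWeight (fun i j => μ i j * ν i j) (k + 1) j =
        q * shiftedWeight (fun i j => μ i j * ν i j) k j := by
  rw [one_add_toricBeta_mul_toricAlpha, one_add_toricAlpha_mul_toricBeta, ← diagonal_smul,
    diagonal_eq_diagonal_iff, Fin.forall_iff]
  simp

end Toric

/-- For a full-flag toric multiplicative quiver, the equations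
`1 + β_{i+1} α_{i+1} = q_{i+1} (1 + α_i β_i)` for `0 ≤ i ≤ r-2` (note `α_0 β_0 = 0`
automatically since `ℂ^0 = 0`) hold iff `μ_j^i ν_j^i = q_i q_{i-1} ⋯ q_j − 1`
for all `1 ≤ j ≤ i ≤ r-1` (here written with 0-indexed `j`). -/
theorem toric_quiver_equations_iff (r : ℕ) (hr : 2 ≤ r)
    (ν μ : ℕ → ℕ → ℂ) (q : ℕ → ℂ) :
    (∀ i, i ≤ r - 2 →
        (1 : Matrix (Fin (i + 1)) (Fin (i + 1)) ℂ)
            + toricBeta μ (i + 1) * toricAlpha ν (i + 1)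
          = q (i + 1) • ((1 : Matrix (Fin (i + 1)) (Fin (i + 1)) ℂ)
            + toricAlpha ν i * toricBeta μ i))
      ↔ (∀ i j, 1 ≤ i → i ≤ r - 1 → j < i →
          μ i j * ν i j = (∏ t ∈ Finset.Icc (j + 1) i, q t) - 1) := by
  obtain ⟨N, rfl⟩ : ∃ N, r = N + 2 := ⟨r - 2, by omega⟩
  simp only [toric_quiver_equation_iff, Nat.add_sub_cancel, show N + 2 - 1 = N + 1 by omega]
  have empty_prod (i : ℕ) : ∏ t ∈ Icc (i + 1) i, q t = 1 := by simp
  rw [recursion_iff_eq_prod_Icc _ (shiftedWeight_self _), forall_shiftedWeight_eq_iff _ _ empty_prod]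
end

section
/- For a full-flag multiplicative quiver with β_i in the standard form β_i = (0 | I_{i×i}) for all i, the endomorphism Y = 1 + α_{n-1}β_{n-1} ∈ End(ℂ^n) is upper triangular with diagonal entries 1, q_{n-1}, q_{n-1}q_{n-2}, …, q_{n-1}q_{n-2}⋯q_1. -/
/-!
Since `β_k = (0 | I)`, the first column of `Y_k = 1 + α_k β_k` is the first basis vector, and
deleting the first row and column of `Y_{k+1}` leaves `1 + β_{k+1} α_{k+1}`, which the quiver
relation identifies with `q_{k+1} Y_k`. Induction on `k` gives both triangularity and the diagonal.
-/

/-- The standard form `β_i = (0 | I_{i×i})`, an `i × (i+1)` matrix whose first column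
is zero and whose remaining columns form the identity. -/
def stdBeta (i : ℕ) : Matrix (Fin i) (Fin (i + 1)) ℂ :=
  fun a b => if (b : ℕ) = (a : ℕ) + 1 then 1 else 0

open Matrix

namespace Matrix

theorem blockTriangular_id_of_submatrix_succ {R : Type*} [Zero R] {n : ℕ}
    {Y : Matrix (Fin (n + 1)) (Fin (n + 1)) R} (hcol : ∀ a, a ≠ 0 → Y a 0 = 0)
    (hsub : (Y.submatrix Fin.succ Fin.succ).BlockTriangular id) : Y.BlockTriangular id := by
  intro a b hba
  induction b using Fin.cases with
  | zero => exact hcol a (Fin.pos_iff_ne_zero.mp hba)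
  | succ b =>
    induction a using Fin.cases with
    | zero => exact absurd hba (Fin.not_lt_zero _)
    | succ a => exact hsub (Fin.succ_lt_succ_iff.mp hba)

end Matrix

section StdBeta

variable {n : Type*} {k : ℕ}

@[simp]
theorem mul_stdBeta_apply_zero (M : Matrix n (Fin k) ℂ) (a : n) : (M * stdBeta k) a 0 = 0 := by
  simp [mul_apply, stdBeta]

@[simp]
theorem mul_stdBeta_apply_succ (M : Matrix n (Fin k) ℂ) (a : n) (b : Fin k) :
    (M * stdBeta k) a b.succ = M a b := by
  simp [mul_apply, stdBeta, Fin.val_inj]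

@[simp]
theorem stdBeta_mul_apply (M : Matrix (Fin (k + 1)) n ℂ) (a : Fin k) (b : n) :
    (stdBeta k * M) a b = M a.succ b := by
  rw [mul_apply, Finset.sum_eq_single a.succ]
  · simp [stdBeta]
  · intro c _ hc
    simp [stdBeta, ← Fin.val_succ, Fin.val_inj, hc]
  · simp

theorem submatrix_succ_one_add_mul_stdBeta (M : Matrix (Fin (k + 2)) (Fin (k + 1)) ℂ) :
    (1 + M * stdBeta (k + 1)).submatrix Fin.succ Fin.succ = 1 + stdBeta (k + 1) * M := by
  ext a b
  simp [one_apply]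

end StdBeta

section Quiver

variable {α : ∀ i : ℕ, Matrix (Fin (i + 1)) (Fin i) ℂ} {q : ℕ → ℂ} {m : ℕ}

theorem submatrix_succ_one_add_mul_stdBeta_eq_smul {k : ℕ}
    (h : (1 : Matrix (Fin (k + 1)) (Fin (k + 1)) ℂ) + stdBeta (k + 1) * α (k + 1)
        = q (k + 1) • ((1 : Matrix (Fin (k + 1)) (Fin (k + 1)) ℂ) + α k * stdBeta k)) :
    (1 + α (k + 1) * stdBeta (k + 1)).submatrix Fin.succ Fin.succ
      = q (k + 1) • (1 + α k * stdBeta k) := by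
  rw [submatrix_succ_one_add_mul_stdBeta, h]

theorem blockTriangular_one_add_mul_stdBeta
    (heq : ∀ i < m,
      (1 : Matrix (Fin (i + 1)) (Fin (i + 1)) ℂ) + stdBeta (i + 1) * α (i + 1)
        = q (i + 1) • ((1 : Matrix (Fin (i + 1)) (Fin (i + 1)) ℂ) + α i * stdBeta i)) :
    (1 + α m * stdBeta m).BlockTriangular id := by
  induction m with
  | zero => exact fun i j hji => absurd hji (by omega)
  | succ k ih =>
    refine blockTriangular_id_of_submatrix_succ (fun a ha => by simp [one_apply, ha]) ?_
    intro a b hba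
    rw [submatrix_succ_one_add_mul_stdBeta_eq_smul (heq k k.lt_succ_self), Matrix.smul_apply,
      ih (fun i hi => heq i (hi.trans k.lt_succ_self)) hba, smul_zero]

theorem one_add_mul_stdBeta_apply_self
    (heq : ∀ i < m,
      (1 : Matrix (Fin (i + 1)) (Fin (i + 1)) ℂ) + stdBeta (i + 1) * α (i + 1)
        = q (i + 1) • ((1 : Matrix (Fin (i + 1)) (Fin (i + 1)) ℂ) + α i * stdBeta i))
    (i : Fin (m + 1)) :
    (1 + α m * stdBeta m : Matrix (Fin (m + 1)) (Fin (m + 1)) ℂ) i i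
      = ∏ t ∈ Finset.Icc (m - (i : ℕ) + 1) m, q t := by
  induction m with
  | zero => simp [Fin.fin_one_eq_zero i]
  | succ k ih =>
    induction i using Fin.cases with
    | zero => simp
    | succ j =>
      have hrec :=
        congr_fun₂ (submatrix_succ_one_add_mul_stdBeta_eq_smul (heq k k.lt_succ_self)) j j
      rw [submatrix_apply] at hrec
      rw [hrec, Matrix.smul_apply, smul_eq_mul,
        ih (fun i hi => heq i (hi.trans k.lt_succ_self)) j,
        Fin.val_succ, Nat.add_sub_add_right, Finset.prod_Icc_succ_top (by omega), mul_comm]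

end Quiver

theorem stdForm_Y_triangular_general (m : ℕ)
    (α : ∀ i : ℕ, Matrix (Fin (i + 1)) (Fin i) ℂ) (q : ℕ → ℂ)
    (heq : ∀ i, i ≤ m - 1 →
      (1 : Matrix (Fin (i + 1)) (Fin (i + 1)) ℂ) + stdBeta (i + 1) * α (i + 1)
        = q (i + 1) • ((1 : Matrix (Fin (i + 1)) (Fin (i + 1)) ℂ) + α i * stdBeta i)) :
    (((1 : Matrix (Fin (m + 1)) (Fin (m + 1)) ℂ) + α m * stdBeta m).BlockTriangular id) ∧
    (∀ i : Fin (m + 1),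
      ((1 : Matrix (Fin (m + 1)) (Fin (m + 1)) ℂ) + α m * stdBeta m) i i
        = ∏ t ∈ Finset.Icc (m - (i : ℕ) + 1) m, q t) := by
  have heq' : ∀ i < m, _ := fun i hi => heq i (by omega)
  exact ⟨blockTriangular_one_add_mul_stdBeta heq', one_add_mul_stdBeta_apply_self heq'⟩

/-- Full-flag multiplicative quiver with `n = m + 1`: if every `β_i` is in the standard
form `(0 | I)` and the equations `1 + β_{i+1} α_{i+1} = q_{i+1}(1 + α_i β_i)` hold
(for `0 ≤ i ≤ n - 2`, with `α_0 β_0 = 0` automatic since `ℂ^0 = 0`), then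
`Y = 1 + α_{n-1} β_{n-1}` is upper triangular with diagonal entries
`1, q_{n-1}, q_{n-1} q_{n-2}, …, q_{n-1} ⋯ q_1`. -/
theorem stdForm_Y_triangular (m : ℕ) (hm : 1 ≤ m)
    (α : ∀ i : ℕ, Matrix (Fin (i + 1)) (Fin i) ℂ) (q : ℕ → ℂ) (hq : ∀ i, q i ≠ 0)
    (heq : ∀ i, i ≤ m - 1 →
      (1 : Matrix (Fin (i + 1)) (Fin (i + 1)) ℂ) + stdBeta (i + 1) * α (i + 1)
        = q (i + 1) • ((1 : Matrix (Fin (i + 1)) (Fin (i + 1)) ℂ) + α i * stdBeta i)) :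
    (((1 : Matrix (Fin (m + 1)) (Fin (m + 1)) ℂ) + α m * stdBeta m).BlockTriangular id) ∧
    (∀ i : Fin (m + 1),
      ((1 : Matrix (Fin (m + 1)) (Fin (m + 1)) ℂ) + α m * stdBeta m) i i
        = ∏ t ∈ Finset.Icc (m - (i : ℕ) + 1) m, q t) :=
  stdForm_Y_triangular_general m α q heq
end

section
/- Define Φ : SL(2,ℂ) × B → ℂ^5 by Φ(u,v) = (a, c, e, X, Y) where u = (a b; c d), v = (e f; 0 e'), X = e(af + (e'−e)b), Y = e(cf + (e'−e)d). Then the image of Φ is contained in the quadric {(a, c, e, X, Y) ∈ ℂ^5 : cX − aY = e² − 1, e ≠ 0}, and Φ is invariant under the right N-action (u,v) ↦ (u g^{-1}, g v g^{-1}). -/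
open Matrix

/-- The invariant map `Φ(u, v) = (a, c, e, X, Y)` where `u = (a b; c d)`,
`v = (e f; 0 e')`, `X = e(a f + (e' − e) b)`, `Y = e(c f + (e' − e) d)`. -/
def PhiMap (u v : Matrix (Fin 2) (Fin 2) ℂ) : ℂ × ℂ × ℂ × ℂ × ℂ :=
  (u 0 0, u 1 0, v 0 0,
    v 0 0 * (u 0 0 * v 0 1 + (v 1 1 - v 0 0) * u 0 1),
    v 0 0 * (u 1 0 * v 0 1 + (v 1 1 - v 0 0) * u 1 1))

section FinTwo

variable {R : Type*} [CommRing R]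

lemma inv_upperRight_unipotent (t : R) : (!![1, t; 0, 1])⁻¹ = !![1, -t; 0, 1] :=
  inv_eq_right_inv (by simp [one_fin_two])

lemma det_fin_two_of_apply_one_zero {v : Matrix (Fin 2) (Fin 2) R} (hv10 : v 1 0 = 0) :
    v.det = v 0 0 * v 1 1 := by
  rw [det_fin_two, hv10, mul_zero, sub_zero]

end FinTwo

section PhiMap

variable {u v : Matrix (Fin 2) (Fin 2) ℂ}

/-- With `u = (a b; c d)` and `e e' = 1`, `cX − aY = e (e' − e)(cb − ad) = e² − 1`. -/
lemma PhiMap_quadric (hu : u.det = 1) (hv : v 0 0 * v 1 1 = 1) :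
    (PhiMap u v).2.1 * (PhiMap u v).2.2.2.1 - (PhiMap u v).1 * (PhiMap u v).2.2.2.2
      = (PhiMap u v).2.2.1 ^ 2 - 1 := by
  rw [det_fin_two] at hu
  simp only [PhiMap]
  linear_combination (v 0 0 * (v 0 0 - v 1 1)) * hu - hv

lemma PhiMap_unipotent_conj (hv10 : v 1 0 = 0) (t : ℂ) :
    PhiMap (u * !![1, -t; 0, 1]) (!![1, t; 0, 1] * v * !![1, -t; 0, 1]) = PhiMap u v := by
  rw [eta_fin_two u, eta_fin_two v, hv10]
  simp only [PhiMap, mul_fin_two, of_apply, cons_val', cons_val_zero, cons_val_one,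
    empty_val', cons_val_fin_one]
  ext <;> simp only <;> ring

end PhiMap

/-- The image of `Φ : SL(2,ℂ) × B → ℂ⁵` is contained in the quadric
`{(a,c,e,X,Y) : cX − aY = e² − 1, e ≠ 0}`, and `Φ` is invariant under the right
`N`-action `(u,v) ↦ (u g⁻¹, g v g⁻¹)`. -/
theorem Phi_image_and_invariance
    (u v : Matrix (Fin 2) (Fin 2) ℂ)
    (hu : u.det = 1) (hv10 : v 1 0 = 0) (hv : v.det = 1) :
    ((PhiMap u v).2.1 * (PhiMap u v).2.2.2.1 - (PhiMap u v).1 * (PhiMap u v).2.2.2.2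
        = (PhiMap u v).2.2.1 ^ 2 - 1 ∧ (PhiMap u v).2.2.1 ≠ 0) ∧
    (∀ t : ℂ,
      PhiMap (u * (!![1, t; 0, 1])⁻¹) (!![1, t; 0, 1] * v * (!![1, t; 0, 1])⁻¹)
        = PhiMap u v) := by
  have hdiag : v 0 0 * v 1 1 = 1 := by rwa [← det_fin_two_of_apply_one_zero hv10]
  refine ⟨⟨PhiMap_quadric hu hdiag, left_ne_zero_of_mul_eq_one hdiag⟩, fun t => ?_⟩
  rw [inv_upperRight_unipotent]
  exact PhiMap_unipotent_conj hv10 t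
end
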